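/- For l > 0, the Melkumyan sparse kernel k_l is antitone (monotonically nonincreasing) on the interval [0, l]: for all 0 ≤ d₁ ≤ d₂ ≤ l, k_l(d₂) ≤ k_l(d₁). Consequently, grid cells closer to the target cell always receive at least as much weight in the BGK inference as cells farther away. -/

import Mathlib

/-- The Melkumyan sparse kernel of Equation (10), with effective supportive
range `l`: the trigonometric formula on `d ≤ l` and `0` for `d > l`. -/
noncomputable def melkumyanKernel (l : ℝ) (d : ℝ) : ℝ :=
  if d ≤ l then
    ((2 + Real.cos (2 * Real.pi * d / l)) / 3) * (1 - d / l) +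
      Real.sin (2 * Real.pi * d / l) / (2 * Real.pi)
  else 0

/-!
On `[0, l]` the kernel is `p (d / l)` for a fixed profile `p`, and the double-angle formulas
factor its derivative as `p' t = -(4/3) · sin(πt) · g(πt)` with `g u = (π - u) cos u + sin u`.
Both `sin` and `g` are nonnegative on `[0, π]`: `g' u = -(π - u) sin u ≤ 0` there and `g π = 0`.
-/

open Real Set

theorem hasDerivAt_pi_sub_mul_cos_add_sin (u : ℝ) :
    HasDerivAt (fun u => (π - u) * cos u + sin u) (-((π - u) * sin u)) u := by
  have h := (((hasDerivAt_id u).const_sub π).mul (hasDerivAt_cos u)).add (hasDerivAt_sin u)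
  exact h.congr_deriv (by simp only [id]; ring)

theorem pi_sub_mul_cos_add_sin_nonneg {u : ℝ} (hu : u ∈ Icc 0 π) :
    0 ≤ (π - u) * cos u + sin u := by
  have hanti : AntitoneOn (fun u => (π - u) * cos u + sin u) (Icc 0 π) := by
    refine antitoneOn_of_hasDerivWithinAt_nonpos (convex_Icc 0 π) (by fun_prop)
      (fun x _ => (hasDerivAt_pi_sub_mul_cos_add_sin x).hasDerivWithinAt) fun x hx => ?_
    rw [interior_Icc] at hx
    have := sin_nonneg_of_nonneg_of_le_pi hx.1.le hx.2.le
    nlinarith [hx.2]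
  simpa using hanti hu ⟨pi_pos.le, le_rfl⟩ hu.2

noncomputable def melkumyanProfile (t : ℝ) : ℝ :=
  (2 + cos (2 * π * t)) / 3 * (1 - t) + sin (2 * π * t) / (2 * π)

theorem hasDerivAt_melkumyanProfile (t : ℝ) :
    HasDerivAt melkumyanProfile
      (-(4 / 3) * sin (π * t) * ((π - π * t) * cos (π * t) + sin (π * t))) t := by
  have hlin : HasDerivAt (fun t : ℝ => 2 * π * t) (2 * π) t := by
    simpa using (hasDerivAt_id t).const_mul (2 * π)
  have h := (((hlin.cos.const_add 2).div_const 3).mul ((hasDerivAt_id t).const_sub 1)).add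
    (hlin.sin.div_const (2 * π))
  refine h.congr_deriv ?_
  have hdouble : 2 * π * t = 2 * (π * t) := by ring
  simp only [id, hdouble, sin_two_mul, cos_two_mul]
  field_simp
  linear_combination 4 * sin_sq_add_cos_sq (π * t)

theorem antitoneOn_melkumyanProfile : AntitoneOn melkumyanProfile (Icc 0 1) := by
  refine antitoneOn_of_hasDerivWithinAt_nonpos (convex_Icc 0 1)
    (by unfold melkumyanProfile; fun_prop)
    (fun t _ => (hasDerivAt_melkumyanProfile t).hasDerivWithinAt) fun t ht => ?_
  rw [interior_Icc] at ht
  have hπt : π * t ∈ Icc 0 π :=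
    ⟨by nlinarith [pi_pos, ht.1], by nlinarith [pi_pos, ht.2]⟩
  have hsin := sin_nonneg_of_nonneg_of_le_pi hπt.1 hπt.2
  have hg := pi_sub_mul_cos_add_sin_nonneg hπt
  linarith [mul_nonneg hsin hg]

theorem melkumyanKernel_eq_melkumyanProfile {l d : ℝ} (hd : d ≤ l) :
    melkumyanKernel l d = melkumyanProfile (d / l) := by
  simp only [melkumyanKernel, melkumyanProfile, if_pos hd, mul_div_assoc]

/-- The Melkumyan sparse kernel is antitone (monotonically nonincreasing) on
`[0, l]`: closer grid cells always receive at least as much weight. -/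
theorem melkumyanKernel_antitoneOn (l : ℝ) (hl : 0 < l) :
    AntitoneOn (melkumyanKernel l) (Set.Icc 0 l) := by
  have hscale : MapsTo (· / l) (Icc 0 l) (Icc 0 1) := fun d hd =>
    ⟨div_nonneg hd.1 hl.le, (div_le_one hl).2 hd.2⟩
  have hmono : MonotoneOn (· / l) (Icc 0 l) := fun _ _ _ _ h => div_le_div_of_nonneg_right h hl.le
  intro a ha b hb hab
  rw [melkumyanKernel_eq_melkumyanProfile ha.2, melkumyanKernel_eq_melkumyanProfile hb.2]
  exact antitoneOn_melkumyanProfile.comp_MonotoneOn hmono hscale ha hb hab
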